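/- Let G be a reduced finite graph consisting of an odd cycle attached at the vertex A to a tree, and for each x ≥ 1 let S_x denote the set of vertices of the tree at distance x from A. Suppose G has a telescoping vertex v ∈ S_d for some d ≥ 1. Then: (i) the degree of A is at most 4, and deg A = 3 if and only if d = 1; (ii) the cardinalities |S₁|, |S₂|, …, |S_{d−1}| are all even and |S_d| is odd; (iii) the sum of the degrees of the vertices in S_d \ {v} is even. -/

import Mathlib

noncomputable section
open scoped Classical

/-- A finite multigraph with vertices and edge labels drawn from `ℕ`;
loops and multiple edges are allowed.  `ends e` is the unordered pair of
endpoints of the edge labelled `e`. -/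
structure MGraph where
  verts : Finset ℕ
  edges : Finset ℕ
  ends : ℕ → Sym2 ℕ

namespace MGraph

/-- Well-formedness: every edge joins vertices of the graph. -/
def WF (G : MGraph) : Prop := ∀ e ∈ G.edges, ∀ v ∈ G.ends e, v ∈ G.verts

/-- Delete the edge labelled `e`. -/
def delEdge (G : MGraph) (e : ℕ) : MGraph := ⟨G.verts, G.edges.erase e, G.ends⟩

/-- Delete the vertex `v` together with all incident edges. -/
def delVert (G : MGraph) (v : ℕ) : MGraph :=
  ⟨G.verts.erase v, G.edges.filter (fun e => ¬ v ∈ G.ends e), G.ends⟩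

def size (G : MGraph) : ℕ := G.verts.card + G.edges.card

/-- Minimal excludant of a finite set of naturals. -/
def mex (s : Finset ℕ) : ℕ := sInf {n : ℕ | n ∉ s}

/-- Grundy-value computation with fuel; every move strictly decreases `size`,
so fuel `size G` computes the true Sprague–Grundy value of `G`. -/
def nimAux : ℕ → MGraph → ℕ
  | 0, _ => 0
  | fuel + 1, G =>
      mex ((G.verts.image fun v => nimAux fuel (G.delVert v)) ∪
           (G.edges.image fun e => nimAux fuel (G.delEdge e)))

/-- The nim-value (Sprague–Grundy value) of the vertex-and-edge deletion game on
`G` : `ν(∅) = 0` and `ν(G) = mex {ν(H) : H is obtained from G by a single move}`,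
where a move deletes one edge, or one vertex with all incident edges. -/
def nim (G : MGraph) : ℕ := nimAux G.size G

/-- The parity function `φ(G) = (|V| mod 2) + 2 (|E| mod 2)`. -/
def phi (G : MGraph) : ℕ := G.verts.card % 2 + 2 * (G.edges.card % 2)

/-- `u` and `v` are joined by an edge. -/
def Adj (G : MGraph) (u v : ℕ) : Prop := ∃ e ∈ G.edges, G.ends e = Sym2.mk u v

def Reach (G : MGraph) (u v : ℕ) : Prop := Relation.ReflTransGen G.Adj u v

def Connected (G : MGraph) : Prop :=
  G.verts.Nonempty ∧ ∀ u ∈ G.verts, ∀ v ∈ G.verts, G.Reach u v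

/-- A (finite) tree: a connected well-formed graph with `|E| + 1 = |V|`
(this forces the absence of loops, multiple edges and cycles). -/
def IsTree (G : MGraph) : Prop := G.WF ∧ G.Connected ∧ G.edges.card + 1 = G.verts.card

/-- `G` is a cycle graph of length `n ≥ 2`. -/
def IsCycle (G : MGraph) (n : ℕ) : Prop :=
  2 ≤ n ∧ ∃ f g : ℕ → ℕ,
    Set.InjOn f (Set.Iio n) ∧ Set.InjOn g (Set.Iio n) ∧
    G.verts = (Finset.range n).image f ∧
    G.edges = (Finset.range n).image g ∧
    ∀ i < n, G.ends (g i) = Sym2.mk (f i) (f ((i + 1) % n))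

/-- `G` is a cycle of odd length (hence of length at least 3). -/
def IsOddCycle (G : MGraph) : Prop := ∃ n, Odd n ∧ G.IsCycle n

/-- Induced subgraph on a set of vertices. -/
def induce (G : MGraph) (S : Finset ℕ) : MGraph :=
  ⟨S, G.edges.filter (fun e => ∀ v ∈ G.ends e, v ∈ S), G.ends⟩

/-- The connected component of `v` in `G`. -/
def component (G : MGraph) (v : ℕ) : MGraph :=
  G.induce (G.verts.filter fun u => G.Reach v u)

/-- Two `MGraph`s are the same graph (same vertices, edges and incidence). -/
def SameGraph (G H : MGraph) : Prop :=
  G.verts = H.verts ∧ G.edges = H.edges ∧ ∀ e ∈ G.edges, G.ends e = H.ends e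

/-- An isomorphism of multigraphs. -/
structure Iso (G H : MGraph) where
  vmap : ℕ → ℕ
  emap : ℕ → ℕ
  vmap_bij : Set.BijOn vmap (G.verts : Set ℕ) (H.verts : Set ℕ)
  emap_bij : Set.BijOn emap (G.edges : Set ℕ) (H.edges : Set ℕ)
  ends_eq : ∀ e ∈ G.edges, H.ends (emap e) = (G.ends e).map vmap

/-- The data witnessing a cancellation at the vertex `s` : `G` is the disjoint
union of a graph `G'` containing `s` and two isomorphic graphs, with vertex
sets `B` and `C`, together with two edges `e₁`, `e₂` joining `s` to
corresponding vertices `v₁ ∈ B`, `v₂ ∈ C`. -/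
def Cancellation (G : MGraph) (s : ℕ) (B C : Finset ℕ) : Prop :=
  ∃ e₁ e₂ v₁ v₂ : ℕ,
    s ∈ G.verts ∧ s ∉ B ∧ s ∉ C ∧ Disjoint B C ∧
    B ⊆ G.verts ∧ C ⊆ G.verts ∧ v₁ ∈ B ∧ v₂ ∈ C ∧
    e₁ ∈ G.edges ∧ e₂ ∈ G.edges ∧ e₁ ≠ e₂ ∧
    G.ends e₁ = Sym2.mk s v₁ ∧ G.ends e₂ = Sym2.mk s v₂ ∧
    (∀ e ∈ G.edges, e = e₁ ∨ e = e₂ ∨ (∀ v ∈ G.ends e, v ∈ B) ∨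
      (∀ v ∈ G.ends e, v ∈ C) ∨ (∀ v ∈ G.ends e, v ∈ G.verts \ (B ∪ C))) ∧
    ∃ φ : Iso (G.induce B) (G.induce C), φ.vmap v₁ = v₂

def HasCancellationAt (G : MGraph) (s : ℕ) : Prop := ∃ B C, G.Cancellation s B C

/-- A graph is reduced if no cancellation is possible. -/
def Reduced (G : MGraph) : Prop := ∀ s, ¬ G.HasCancellationAt s

/-- Performing one cancellation. -/
def CancelStep (G G' : MGraph) : Prop :=
  ∃ s B C, G.Cancellation s B C ∧ G' = G.induce (G.verts \ (B ∪ C))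

/-- `G` reduces to `H` by a (possibly empty) sequence of cancellations. -/
def ReducesTo (G H : MGraph) : Prop := Relation.ReflTransGen CancelStep G H

/-- `G` consists of the odd cycle `C` attached to the tree `T` at the single
vertex `A`. -/
def CycleWithTreeAt (G C T : MGraph) (A : ℕ) : Prop :=
  C.IsOddCycle ∧ T.IsTree ∧
  C.verts ∩ T.verts = {A} ∧
  Disjoint C.edges T.edges ∧
  G.verts = C.verts ∪ T.verts ∧
  G.edges = C.edges ∪ T.edges ∧
  (∀ e ∈ C.edges, G.ends e = C.ends e) ∧
  (∀ e ∈ T.edges, G.ends e = T.ends e)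

/-- For a graph `G` containing the odd cycle `C` attached to the rest of the
graph at the vertex `A` : the vertex `v` (outside the cycle) is telescoping if,
after deleting `v`, the connected component of `A` reduces by repeatedly
performing cancellations to exactly the cycle `C`. -/
def Telescoping (G C : MGraph) (A v : ℕ) : Prop :=
  v ∈ G.verts ∧ v ∉ C.verts ∧
  ∃ H, ReducesTo ((G.delVert v).component A) H ∧ H.SameGraph C

/-- The degree of the vertex `v`; a loop contributes `2`. -/
def degree (G : MGraph) (v : ℕ) : ℕ :=
  ∑ e ∈ G.edges,
    (if G.ends e = Sym2.mk v v then 2 else if v ∈ G.ends e then 1 else 0)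

def NoLoops (G : MGraph) : Prop := ∀ e ∈ G.edges, ¬ (G.ends e).IsDiag

def IsSubgraph (H G : MGraph) : Prop :=
  H.verts ⊆ G.verts ∧ H.edges ⊆ G.edges ∧ ∀ e ∈ H.edges, H.ends e = G.ends e

/-- `G` contains the odd cycle `C` and no other cycles (of length ≥ 2). -/
def UniqueOddCycle (G C : MGraph) : Prop :=
  C.IsSubgraph G ∧ C.IsOddCycle ∧
  ∀ (C' : MGraph) (n : ℕ), C'.IsSubgraph G → C'.IsCycle n → C'.SameGraph C

/-- `G` is bipartite (two-colourable); in particular it has no loops. -/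
def Bipartite (G : MGraph) : Prop :=
  ∃ c : ℕ → Bool, ∀ e ∈ G.edges, ∀ u v : ℕ, G.ends e = Sym2.mk u v → c u ≠ c v

/-- `G` is a path of length `z` (i.e. with `z` edges) from `P` to `Q`. -/
def IsPath (G : MGraph) (P Q z : ℕ) : Prop :=
  ∃ f g : ℕ → ℕ,
    Set.InjOn f (Set.Iio (z + 1)) ∧ Set.InjOn g (Set.Iio z) ∧
    f 0 = P ∧ f z = Q ∧
    G.verts = (Finset.range (z + 1)).image f ∧
    G.edges = (Finset.range z).image g ∧
    ∀ i < z, G.ends (g i) = Sym2.mk (f i) (f (i + 1))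

/-- There is a walk of length `n` from `u` to `v` in `G`. -/
def WalkLen (G : MGraph) (u v n : ℕ) : Prop :=
  ∃ f : ℕ → ℕ, f 0 = u ∧ f n = v ∧ ∀ i < n, G.Adj (f i) (f (i + 1))

/-- Graph distance between two vertices. -/
def edist (G : MGraph) (u v : ℕ) : ℕ := sInf {n | G.WalkLen u v n}

end MGraph

/-!
Delete `v` and follow the cancellations that reduce the component of `A` to the cycle. At every
stage the remaining vertex set `V` is closed under taking parents in the tree rooted at `A`, and
the vertices of `V` that have lost part of their subtree are exactly the ancestors of a single
vertex `t` (at the start, the parent of `v`). In a cancellation at `s` the two isomorphic pieces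
are the parts in `V` of the subtrees of two children `b`, `c` of `s`. If neither `b` nor `c` had
lost a descendant, the same cancellation would already be possible in the reduced graph `G`; so
one of them is an ancestor of `t`, and after the cancellation `t` moves up to `s`. Depth in a
piece is its root's depth plus the distance from the root, so the isomorphism preserves depth and
every cancellation removes an even number of vertices from each level; it removes two children of
`A` exactly when `s = A`, which can only happen in the last step. Hence, writing `S_x` for the
vertices at depth `x` and `V₀` for the vertices outside the subtree of `v`, every `|S_x ∩ V₀|`
with `x ≥ 1` is even and `|S_1 ∩ V₀|` is `0` if `d = 1` and `2` otherwise. The claims about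
`deg A` and `|S_x|` follow at once, and the last claim because the degrees over `S_d \ {v}` add up
to `|S_d ∩ V₀| + |S_{d+1} ∩ V₀|`.
-/

namespace Nat

lemma add_one_mod_eq_ite {n i : ℕ} (hi : i < n) :
    (i + 1) % n = if i + 1 = n then 0 else i + 1 := by
  split_ifs with h
  · rw [h, Nat.mod_self]
  · exact Nat.mod_eq_of_lt (by omega)

lemma add_sub_one_mod_eq_ite {n j : ℕ} (hj : j < n) :
    (j + n - 1) % n = if j = 0 then n - 1 else j - 1 := by
  split_ifs with h
  · rw [h, zero_add]
    exact Nat.mod_eq_of_lt (by omega)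
  · rw [show j + n - 1 = j - 1 + n by omega, Nat.add_mod_right, Nat.mod_eq_of_lt (by omega)]

lemma add_one_mod_eq_iff {n i j : ℕ} (hi : i < n) (hj : j < n) :
    (i + 1) % n = j ↔ i = (j + n - 1) % n := by
  rw [add_one_mod_eq_ite hi, add_sub_one_mod_eq_ite hj]
  split_ifs <;> omega

end Nat

namespace MGraph

open Finset

attribute [ext] MGraph

lemma mem_induce_edges {G : MGraph} {S : Finset ℕ} {e : ℕ} :
    e ∈ (G.induce S).edges ↔ e ∈ G.edges ∧ ∀ x ∈ G.ends e, x ∈ S :=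
  mem_filter

lemma induce_induce (G : MGraph) {S S' : Finset ℕ} (h : S' ⊆ S) :
    (G.induce S).induce S' = G.induce S' := by
  refine MGraph.ext rfl ?_ rfl
  ext e
  rw [mem_induce_edges, mem_induce_edges, mem_induce_edges]
  exact ⟨fun he => ⟨he.1.1, he.2⟩,
    fun he => ⟨⟨he.1, fun x hx => h (he.2 x hx)⟩, he.2⟩⟩

lemma induce_wf (G : MGraph) (S : Finset ℕ) : (G.induce S).WF :=
  fun _ he x hx => (mem_induce_edges.mp he).2 x hx

lemma adj_induce_iff {G : MGraph} {S : Finset ℕ} {x y : ℕ} :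
    (G.induce S).Adj x y ↔ G.Adj x y ∧ x ∈ S ∧ y ∈ S := by
  constructor
  · rintro ⟨e, he, hend⟩
    have h := (mem_induce_edges.mp he).2
    exact ⟨⟨e, (mem_induce_edges.mp he).1, hend⟩, h x (hend ▸ Sym2.mem_mk_left x y),
      h y (hend ▸ Sym2.mem_mk_right x y)⟩
  · rintro ⟨⟨e, he, hend⟩, hx, hy⟩
    refine ⟨e, mem_induce_edges.mpr ⟨he, fun z hz => ?_⟩, hend⟩
    rw [hend, Sym2.mem_iff] at hz
    rcases hz with rfl | rfl <;> assumption

lemma adj_delVert_iff {G : MGraph} {v x y : ℕ} :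
    (G.delVert v).Adj x y ↔ G.Adj x y ∧ x ≠ v ∧ y ≠ v := by
  simp only [Adj, delVert, mem_filter]
  constructor
  · rintro ⟨e, ⟨he, hv⟩, hend⟩
    rw [hend, Sym2.mem_iff, not_or] at hv
    exact ⟨⟨e, he, hend⟩, Ne.symm hv.1, Ne.symm hv.2⟩
  · rintro ⟨⟨e, he, hend⟩, hx, hy⟩
    exact ⟨e, ⟨he, by rw [hend, Sym2.mem_iff, not_or]; exact ⟨hx.symm, hy.symm⟩⟩, hend⟩

lemma delVert_induce {G : MGraph} {v : ℕ} {S : Finset ℕ} (hv : v ∉ S) :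
    (G.delVert v).induce S = G.induce S := by
  refine MGraph.ext rfl ?_ rfl
  ext e
  rw [mem_induce_edges, mem_induce_edges]
  exact ⟨fun h => ⟨(mem_filter.mp h.1).1, h.2⟩,
    fun h => ⟨mem_filter.mpr ⟨h.1, fun hve => hv (h.2 v hve)⟩, h.2⟩⟩

lemma ReducesTo.verts_subset {K H : MGraph} (h : ReducesTo K H) : H.verts ⊆ K.verts := by
  induction h with
  | refl => exact Subset.rfl
  | tail _ hstep ih =>
    obtain ⟨s, B, C, -, rfl⟩ := hstep
    exact sdiff_subset.trans ih

lemma Adj.symm {G : MGraph} {u v : ℕ} (h : G.Adj u v) : G.Adj v u := by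
  obtain ⟨e, he, hend⟩ := h
  exact ⟨e, he, hend.trans Sym2.eq_swap⟩

lemma degree_eq_card_of_noLoops {G : MGraph} (hG : G.NoLoops) (u : ℕ) :
    G.degree u = #{e ∈ G.edges | u ∈ G.ends e} := by
  rw [degree, card_filter]
  refine sum_congr rfl fun e he => ?_
  rw [if_neg fun h => hG e he (by rw [h]; exact Sym2.mk_isDiag_iff.mpr rfl)]

section Walks

variable {G H : MGraph} {u w x : ℕ} {m n : ℕ}

lemma WalkLen.refl (G : MGraph) (u : ℕ) : G.WalkLen u u 0 :=
  ⟨fun _ => u, rfl, rfl, fun _ h => absurd h (Nat.not_lt_zero _)⟩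

lemma WalkLen.concat (h : G.WalkLen u w n) (hwx : G.Adj w x) : G.WalkLen u x (n + 1) := by
  obtain ⟨f, h0, hn, hs⟩ := h
  refine ⟨fun i => if i = n + 1 then x else f i, by simp [h0], by simp, fun i hi => ?_⟩
  rcases Nat.lt_or_ge i n with hlt | hge
  · dsimp only
    rw [if_neg (by omega), if_neg (by omega)]
    exact hs i hlt
  · obtain rfl : i = n := by omega
    dsimp only
    rw [if_neg (by omega), if_pos rfl, hn]
    exact hwx

lemma WalkLen.snoc_cases (h : G.WalkLen u x (n + 1)) : ∃ w, G.WalkLen u w n ∧ G.Adj w x := by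
  obtain ⟨f, h0, hn, hs⟩ := h
  exact ⟨f n, ⟨f, h0, rfl, fun i hi => hs i (by omega)⟩, hn ▸ hs n (by omega)⟩

lemma WalkLen.trans (h₁ : G.WalkLen u w m) (h₂ : G.WalkLen w x n) : G.WalkLen u x (m + n) := by
  induction n generalizing x with
  | zero =>
    obtain ⟨f, rfl, hn, _⟩ := h₂
    exact hn ▸ h₁
  | succ n ih =>
    obtain ⟨y, hwy, hyx⟩ := h₂.snoc_cases
    exact (ih hwy).concat hyx

lemma WalkLen.mono (hGH : ∀ a b, G.Adj a b → H.Adj a b) (h : G.WalkLen u w n) :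
    H.WalkLen u w n := by
  obtain ⟨f, h0, hn, hs⟩ := h
  exact ⟨f, h0, hn, fun i hi => hGH _ _ (hs i hi)⟩

lemma reach_iff_exists_walkLen : G.Reach u w ↔ ∃ n, G.WalkLen u w n := by
  constructor
  · intro h
    induction h with
    | refl => exact ⟨0, WalkLen.refl G u⟩
    | tail _ hadj ih =>
      obtain ⟨n, hw⟩ := ih
      exact ⟨n + 1, hw.concat hadj⟩
  · rintro ⟨n, hw⟩
    induction n generalizing w with
    | zero =>
      obtain ⟨f, h0, hn, _⟩ := hw
      exact h0 ▸ hn ▸ Relation.ReflTransGen.refl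
    | succ n ih =>
      obtain ⟨y, huy, hyw⟩ := hw.snoc_cases
      exact (ih huy).tail hyw

lemma edist_le (h : G.WalkLen u w n) : G.edist u w ≤ n :=
  Nat.sInf_le h

lemma walkLen_edist (h : G.Reach u w) : G.WalkLen u w (G.edist u w) :=
  Nat.sInf_mem (reach_iff_exists_walkLen.mp h)

@[simp] lemma edist_self (G : MGraph) (u : ℕ) : G.edist u u = 0 :=
  Nat.le_zero.mp (edist_le (WalkLen.refl G u))

lemma eq_of_edist_eq_zero (h : G.Reach u w) (h0 : G.edist u w = 0) : u = w := by
  obtain ⟨f, hf0, hfn, _⟩ := h0 ▸ walkLen_edist h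
  rw [← hf0, hfn]

end Walks

namespace Iso

variable {G H : MGraph} (φ : Iso G H)

lemma adj_map {x y : ℕ} (h : G.Adj x y) : H.Adj (φ.vmap x) (φ.vmap y) := by
  obtain ⟨e, he, hend⟩ := h
  exact ⟨φ.emap e, φ.emap_bij.mapsTo he, by rw [φ.ends_eq e he, hend]; rfl⟩

lemma walkLen_map {u w n : ℕ} (h : G.WalkLen u w n) : H.WalkLen (φ.vmap u) (φ.vmap w) n := by
  obtain ⟨f, rfl, rfl, hs⟩ := h
  exact ⟨fun i => φ.vmap (f i), rfl, rfl, fun i hi => φ.adj_map (hs i hi)⟩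

lemma invOn_vmap : Set.InvOn (Function.invFunOn φ.vmap G.verts) φ.vmap G.verts H.verts :=
  ⟨φ.vmap_bij.injOn.leftInvOn_invFunOn, φ.vmap_bij.surjOn.rightInvOn_invFunOn⟩

lemma invOn_emap : Set.InvOn (Function.invFunOn φ.emap G.edges) φ.emap G.edges H.edges :=
  ⟨φ.emap_bij.injOn.leftInvOn_invFunOn, φ.emap_bij.surjOn.rightInvOn_invFunOn⟩

/-- Well-formedness of `G` keeps all endpoints inside `G.verts`, where `invFunOn φ.vmap` inverts
`φ.vmap`. -/
def symm (hG : G.WF) : Iso H G where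
  vmap := Function.invFunOn φ.vmap G.verts
  emap := Function.invFunOn φ.emap G.edges
  vmap_bij := φ.vmap_bij.symm φ.invOn_vmap.symm
  emap_bij := φ.emap_bij.symm φ.invOn_emap.symm
  ends_eq e he := by
    have he' := (φ.emap_bij.symm φ.invOn_emap.symm).mapsTo he
    have h := φ.ends_eq _ he'
    rw [φ.invOn_emap.2 he] at h
    have hid : ∀ x ∈ G.ends (Function.invFunOn φ.emap G.edges e),
        (Function.invFunOn φ.vmap G.verts ∘ φ.vmap) x = id x :=
      fun x hx => φ.invOn_vmap.1 (hG _ he' x hx)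
    rw [h, Sym2.map_map, Sym2.map_congr hid, Sym2.map_id]
    rfl

lemma symm_vmap_vmap (hG : G.WF) {x : ℕ} (hx : x ∈ G.verts) :
    (φ.symm hG).vmap (φ.vmap x) = x :=
  φ.invOn_vmap.1 hx

lemma vmap_symm_vmap (hG : G.WF) {y : ℕ} (hy : y ∈ H.verts) :
    φ.vmap ((φ.symm hG).vmap y) = y :=
  φ.invOn_vmap.2 hy

end Iso

section RootedTree

variable (T : MGraph) (A : ℕ)

def IsParentEdge (u e p : ℕ) : Prop :=
  e ∈ T.edges ∧ p ∈ T.verts ∧ T.ends e = s(p, u) ∧ T.edist A p + 1 = T.edist A u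

def parentEdgeAndParent (u : ℕ) : ℕ × ℕ :=
  Classical.epsilon fun ep => IsParentEdge T A u ep.1 ep.2

def parentEdge (u : ℕ) : ℕ := (parentEdgeAndParent T A u).1

def parent (u : ℕ) : ℕ := (parentEdgeAndParent T A u).2

def children (u : ℕ) : Finset ℕ := {c ∈ T.verts.erase A | parent T A c = u}

def level (x : ℕ) : Finset ℕ := {w ∈ T.verts | T.edist A w = x}

/-- The depth condition keeps the iteration from passing through `parent T A A`, a junk value. -/
def InSubtree (r u : ℕ) : Prop :=
  u ∈ T.verts ∧ ∃ k, (parent T A)^[k] u = r ∧ T.edist A u = T.edist A r + k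

variable {T A}

lemma mem_level_edist {u : ℕ} (hu : u ∈ T.verts) : u ∈ level T A (T.edist A u) :=
  mem_filter.mpr ⟨hu, rfl⟩

lemma InSubtree.refl {u : ℕ} (hu : u ∈ T.verts) : InSubtree T A u u := ⟨hu, 0, rfl, rfl⟩

lemma InSubtree.mem {r u : ℕ} (h : InSubtree T A r u) : u ∈ T.verts := h.1

lemma InSubtree.edist_le {r u : ℕ} (h : InSubtree T A r u) : T.edist A r ≤ T.edist A u := by
  obtain ⟨_, k, _, hd⟩ := h
  omega

lemma InSubtree.eq_of_edist_le {r u : ℕ} (h : InSubtree T A r u)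
    (hd : T.edist A u ≤ T.edist A r) : u = r := by
  obtain ⟨_, k, hk, hdd⟩ := h
  obtain rfl : k = 0 := by omega
  exact hk

lemma InSubtree.trans {r m u : ℕ} (h₁ : InSubtree T A r m) (h₂ : InSubtree T A m u) :
    InSubtree T A r u := by
  obtain ⟨_, k₁, hk₁, hd₁⟩ := h₁
  obtain ⟨hu, k₂, hk₂, hd₂⟩ := h₂
  exact ⟨hu, k₁ + k₂, by rw [Function.iterate_add_apply, hk₂, hk₁], by omega⟩

lemma InSubtree.ne_root {r u : ℕ} (h : InSubtree T A r u) (hr : r ≠ A) : u ≠ A := by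
  rintro rfl
  exact hr (h.eq_of_edist_le (by simp)).symm

variable (hT : T.IsTree) (hA : A ∈ T.verts)
include hT hA

lemma reach_of_mem {u : ℕ} (hu : u ∈ T.verts) : T.Reach A u := hT.2.1.2 A hA u hu

lemma edist_eq_zero_iff {u : ℕ} (hu : u ∈ T.verts) : T.edist A u = 0 ↔ u = A :=
  ⟨fun h => (eq_of_edist_eq_zero (reach_of_mem hT hA hu) h).symm, fun h => h ▸ edist_self T A⟩

lemma edist_pos {u : ℕ} (hu : u ∈ T.verts) (hne : u ≠ A) : 0 < T.edist A u :=
  Nat.pos_of_ne_zero fun h => hne ((edist_eq_zero_iff hT hA hu).mp h)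

lemma edist_le_of_walkLen {u w n : ℕ} (hu : u ∈ T.verts) (h : T.WalkLen u w n) :
    T.edist A w ≤ T.edist A u + n :=
  edist_le ((walkLen_edist (reach_of_mem hT hA hu)).trans h)

lemma exists_isParentEdge {u : ℕ} (hu : u ∈ T.verts) (hne : u ≠ A) :
    ∃ ep : ℕ × ℕ, IsParentEdge T A u ep.1 ep.2 := by
  have hpos := edist_pos hT hA hu hne
  obtain ⟨f, h0, hfn, hs⟩ := walkLen_edist (reach_of_mem hT hA hu)
  obtain ⟨e, he, hend⟩ := hfn ▸ Nat.sub_add_cancel hpos ▸ hs (T.edist A u - 1) (by omega)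
  have hp : f (T.edist A u - 1) ∈ T.verts :=
    hT.1 e he _ (by rw [hend]; exact Sym2.mem_mk_left _ _)
  have hle : T.edist A (f (T.edist A u - 1)) ≤ T.edist A u - 1 :=
    edist_le ⟨f, h0, rfl, fun i hi => hs i (by omega)⟩
  have hge : T.edist A u ≤ T.edist A (f (T.edist A u - 1)) + 1 :=
    edist_le_of_walkLen hT hA hp ((WalkLen.refl T _).concat ⟨e, he, hend⟩)
  exact ⟨(e, f (T.edist A u - 1)), he, hp, hend, by dsimp only; omega⟩

lemma isParentEdge_parent {u : ℕ} (hu : u ∈ T.verts) (hne : u ≠ A) :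
    IsParentEdge T A u (parentEdge T A u) (parent T A u) :=
  Classical.epsilon_spec (exists_isParentEdge hT hA hu hne)

section Parent

variable {u : ℕ} (hu : u ∈ T.verts) (hne : u ≠ A)
include hu hne

lemma parentEdge_mem : parentEdge T A u ∈ T.edges := (isParentEdge_parent hT hA hu hne).1

lemma parent_mem : parent T A u ∈ T.verts := (isParentEdge_parent hT hA hu hne).2.1

lemma ends_parentEdge : T.ends (parentEdge T A u) = s(parent T A u, u) :=
  (isParentEdge_parent hT hA hu hne).2.2.1

lemma edist_parent : T.edist A (parent T A u) + 1 = T.edist A u :=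
  (isParentEdge_parent hT hA hu hne).2.2.2

lemma parent_ne_self : parent T A u ≠ u := fun h => by
  have := edist_parent hT hA hu hne
  rw [h] at this
  omega

lemma adj_parent : T.Adj u (parent T A u) :=
  ⟨parentEdge T A u, parentEdge_mem hT hA hu hne,
    (ends_parentEdge hT hA hu hne).trans Sym2.eq_swap⟩

lemma inSubtree_parent : InSubtree T A (parent T A u) u :=
  ⟨hu, 1, rfl, (edist_parent hT hA hu hne).symm⟩

end Parent

theorem induction_on_parent {P : ℕ → Prop} (hroot : P A)
    (hstep : ∀ u ∈ T.verts, u ≠ A → P (parent T A u) → P u) : ∀ u ∈ T.verts, P u := by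
  suffices ∀ n, ∀ u ∈ T.verts, T.edist A u = n → P u from fun u hu => this _ u hu rfl
  intro n
  induction n using Nat.strong_induction_on with
  | _ n ih =>
    intro u hu hn
    by_cases huA : u = A
    · exact huA ▸ hroot
    · have := edist_parent hT hA hu huA
      exact hstep u hu huA (ih _ (by omega) _ (parent_mem hT hA hu huA) rfl)

lemma parentEdge_injOn : Set.InjOn (parentEdge T A) (T.verts.erase A) := by
  intro u hu u' hu' heq
  simp only [coe_erase, Set.mem_sdiff, mem_coe, Set.mem_singleton_iff] at hu hu'
  have hd := edist_parent hT hA hu.1 hu.2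
  have hd' := edist_parent hT hA hu'.1 hu'.2
  have hend := (ends_parentEdge hT hA hu.1 hu.2).symm.trans
    (heq ▸ ends_parentEdge hT hA hu'.1 hu'.2)
  rcases Sym2.eq_iff.mp hend with ⟨-, h⟩ | ⟨h₁, h₂⟩
  · exact h
  · rw [h₁] at hd
    rw [← h₂] at hd'
    omega

lemma image_parentEdge : (T.verts.erase A).image (parentEdge T A) = T.edges := by
  refine eq_of_subset_of_card_le (fun e he => ?_) ?_
  · obtain ⟨u, hu, rfl⟩ := mem_image.mp he
    exact parentEdge_mem hT hA (mem_of_mem_erase hu) (ne_of_mem_erase hu)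
  · rw [card_image_of_injOn (parentEdge_injOn hT hA), card_erase_of_mem hA, ← hT.2.2]
    rfl

lemma exists_eq_parentEdge {e : ℕ} (he : e ∈ T.edges) :
    ∃ w ∈ T.verts, w ≠ A ∧ e = parentEdge T A w := by
  rw [← image_parentEdge hT hA] at he
  obtain ⟨w, hw, rfl⟩ := mem_image.mp he
  exact ⟨w, mem_of_mem_erase hw, ne_of_mem_erase hw, rfl⟩

lemma noLoops : T.NoLoops := by
  intro e he
  obtain ⟨w, hw, hwA, rfl⟩ := exists_eq_parentEdge hT hA he
  rw [ends_parentEdge hT hA hw hwA, Sym2.mk_isDiag_iff]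
  exact parent_ne_self hT hA hw hwA

lemma adj_iff {x y : ℕ} :
    T.Adj x y ↔ (x ∈ T.verts ∧ x ≠ A ∧ y = parent T A x) ∨
      (y ∈ T.verts ∧ y ≠ A ∧ x = parent T A y) := by
  constructor
  · rintro ⟨e, he, hend⟩
    obtain ⟨w, hw, hwA, rfl⟩ := exists_eq_parentEdge hT hA he
    rcases Sym2.eq_iff.mp ((ends_parentEdge hT hA hw hwA).symm.trans hend) with
      ⟨rfl, rfl⟩ | ⟨rfl, rfl⟩
    · exact Or.inr ⟨hw, hwA, rfl⟩
    · exact Or.inl ⟨hw, hwA, rfl⟩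
  · rintro (⟨hx, hxA, rfl⟩ | ⟨hy, hyA, rfl⟩)
    · exact adj_parent hT hA hx hxA
    · exact (adj_parent hT hA hy hyA).symm

lemma degree_eq {u : ℕ} (hu : u ∈ T.verts) :
    T.degree u = #(children T A u) + if u = A then 0 else 1 := by
  have hmem : ∀ w ∈ T.verts.erase A,
      u ∈ T.ends (parentEdge T A w) ↔ parent T A w = u ∨ w = u :=
    fun w hw => by
      rw [ends_parentEdge hT hA (mem_of_mem_erase hw) (ne_of_mem_erase hw), Sym2.mem_iff, eq_comm,
        @eq_comm _ u]
  rw [degree_eq_card_of_noLoops (noLoops hT hA), ← image_parentEdge hT hA, filter_image,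
    card_image_of_injOn ((parentEdge_injOn hT hA).mono (filter_subset _ _)), filter_congr hmem,
    filter_or, card_union_of_disjoint, filter_eq']
  · by_cases huA : u = A <;> simp [huA, hu, children]
  · exact disjoint_filter.mpr fun w hw hpar hwu =>
      parent_ne_self hT hA (mem_of_mem_erase hw) (ne_of_mem_erase hw) (hpar.trans hwu.symm)

lemma children_root : children T A A = level T A 1 := by
  ext c
  simp only [children, level, mem_filter, mem_erase]
  constructor
  · rintro ⟨⟨hcA, hc⟩, hpar⟩
    have := edist_parent hT hA hc hcA
    rw [hpar, edist_self] at this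
    exact ⟨hc, this.symm.trans (zero_add 1)⟩
  · rintro ⟨hc, hd⟩
    have hcA : c ≠ A := fun h => by simp [h] at hd
    have := edist_parent hT hA hc hcA
    exact ⟨⟨hcA, hc⟩, (edist_eq_zero_iff hT hA (parent_mem hT hA hc hcA)).mp (by omega)⟩

lemma InSubtree.mem_root {r u : ℕ} (h : InSubtree T A r u) : r ∈ T.verts := by
  obtain ⟨hu, k, hk, hd⟩ := h
  induction k generalizing u with
  | zero => exact hk ▸ hu
  | succ k ih =>
    have huA : u ≠ A := fun h0 => by simp [h0] at hd
    have := edist_parent hT hA hu huA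
    exact ih (parent_mem hT hA hu huA) (by rwa [← Function.iterate_succ_apply]) (by omega)

lemma InSubtree.parent_of_ne {r u : ℕ} (h : InSubtree T A r u) (hne : u ≠ r) :
    u ≠ A ∧ InSubtree T A r (parent T A u) := by
  obtain ⟨hu, k, hk, hd⟩ := h
  obtain ⟨k, rfl⟩ : ∃ k', k = k' + 1 :=
    Nat.exists_eq_succ_of_ne_zero fun h0 => hne (by subst h0; exact hk)
  have huA : u ≠ A := fun h0 => by simp [h0] at hd
  have := edist_parent hT hA hu huA
  exact ⟨huA, parent_mem hT hA hu huA, k, by rwa [Function.iterate_succ_apply] at hk, by omega⟩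

lemma InSubtree.total {u r w : ℕ} (h₁ : InSubtree T A u w) (h₂ : InSubtree T A r w) :
    InSubtree T A u r ∨ InSubtree T A r u := by
  obtain ⟨hw, k₁, hk₁, hd₁⟩ := h₁
  obtain ⟨-, k₂, hk₂, hd₂⟩ := h₂
  rcases le_total k₁ k₂ with h | h
  · refine Or.inr ⟨mem_root hT hA ⟨hw, k₁, hk₁, hd₁⟩, k₂ - k₁, ?_, by omega⟩
    rw [← hk₁, ← Function.iterate_add_apply, Nat.sub_add_cancel h, hk₂]
  · refine Or.inl ⟨mem_root hT hA ⟨hw, k₂, hk₂, hd₂⟩, k₁ - k₂, ?_, by omega⟩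
    rw [← hk₂, ← Function.iterate_add_apply, Nat.sub_add_cancel h, hk₁]

lemma InSubtree.of_adj {r b c : ℕ} (h : InSubtree T A r c) (hc : c ≠ r) (hbc : T.Adj b c) :
    InSubtree T A r b := by
  rcases (adj_iff hT hA).mp hbc with ⟨hb, hbA, rfl⟩ | ⟨-, -, rfl⟩
  · exact h.trans (inSubtree_parent hT hA hb hbA)
  · exact (h.parent_of_ne hT hA hc).2

lemma InSubtree.parent_of_not_inSubtree {u r w : ℕ} (huw : InSubtree T A u w)
    (hrw : InSubtree T A r w) (hru : ¬ InSubtree T A r u) : InSubtree T A u (parent T A r) := by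
  have hur := (huw.total hT hA hrw).resolve_right hru
  refine (hur.parent_of_ne hT hA fun h => hru ?_).2
  rw [h]
  exact InSubtree.refl (huw.mem_root hT hA)

end RootedTree

lemma degree_eq_zero_of_notMem {G : MGraph} (hG : G.WF) {u : ℕ} (hu : u ∉ G.verts) :
    G.degree u = 0 := by
  refine sum_eq_zero fun e he => ?_
  have h : u ∉ G.ends e := fun h => hu (hG e he u h)
  rw [if_neg (fun h' => h (by rw [h']; exact Sym2.mem_mk_left u u)), if_neg h]

section Cycle

variable {C : MGraph} {n : ℕ} (hC : C.IsCycle n)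
include hC

lemma IsCycle.wf : C.WF := by
  obtain ⟨hn, f, g, -, -, hv, he, hends⟩ := hC
  intro e hee x hx
  obtain ⟨i, hi, rfl⟩ := mem_image.mp (he ▸ hee)
  rw [hends i (mem_range.mp hi), Sym2.mem_iff] at hx
  rw [hv]
  rcases hx with rfl | rfl
  · exact mem_image_of_mem f hi
  · exact mem_image_of_mem f (mem_range.mpr (Nat.mod_lt _ (by omega)))

lemma IsCycle.noLoops : C.NoLoops := by
  obtain ⟨hn, f, g, hf, -, -, he, hends⟩ := hC
  intro e he'
  obtain ⟨i, hi, rfl⟩ := mem_image.mp (he ▸ he')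
  have hi := mem_range.mp hi
  rw [hends i hi, Sym2.mk_isDiag_iff]
  intro h
  have := hf (Nat.mod_lt _ (by omega)) hi h.symm
  rw [Nat.add_one_mod_eq_ite hi] at this
  split_ifs at this <;> omega

lemma IsCycle.degree_eq_two {u : ℕ} (hu : u ∈ C.verts) : C.degree u = 2 := by
  have hnoLoops := hC.noLoops
  obtain ⟨hn, f, g, hf, hg, hv, he, hends⟩ := hC
  obtain ⟨j, hj, rfl⟩ := mem_image.mp (hv ▸ hu)
  have hj : j < n := mem_range.mp hj
  have hmod {i : ℕ} (hi : i < n) : (i + 1) % n < n := Nat.mod_lt _ (by omega)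
  have hmem : ∀ i ∈ range n, f j ∈ C.ends (g i) ↔ i = j ∨ i = (j + n - 1) % n :=
    fun i hi => by
    have hi := mem_range.mp hi
    rw [hends i hi, Sym2.mem_iff, ← Nat.add_one_mod_eq_iff hi hj]
    exact or_congr ⟨fun h => hf hi hj h.symm, fun h => h ▸ rfl⟩
      ⟨fun h => hf (hmod hi) hj h.symm, fun h => h ▸ rfl⟩
  rw [degree_eq_card_of_noLoops hnoLoops, he, filter_image,
    card_image_of_injOn (hg.mono fun i hi => mem_range.mp (mem_filter.mp hi).1),
    filter_congr hmem, filter_or, filter_eq', filter_eq', if_pos (mem_range.mpr hj),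
    if_pos (mem_range.mpr (Nat.mod_lt _ (by omega))), card_union_of_disjoint, card_singleton,
    card_singleton]
  rw [disjoint_singleton, Nat.add_sub_one_mod_eq_ite hj]
  split_ifs <;> omega

end Cycle

def IsBranch (K : MGraph) (s b : ℕ) (B : Finset ℕ) : Prop :=
  b ∈ B ∧ ∀ x y, K.Adj x y → x ∈ B → y ∉ B → x = b ∧ y = s

lemma isBranch_of_partition {K : MGraph} {s b b' e e' : ℕ} {B B' : Finset ℕ}
    (hsB : s ∉ B) (hdisj : Disjoint B B') (hb : b ∈ B) (hb' : b' ∈ B')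
    (he : K.ends e = s(s, b)) (he' : K.ends e' = s(s, b'))
    (hpart : ∀ f ∈ K.edges, f = e ∨ f = e' ∨ (∀ x ∈ K.ends f, x ∈ B) ∨
      (∀ x ∈ K.ends f, x ∈ B') ∨ (∀ x ∈ K.ends f, x ∉ B)) :
    IsBranch K s b B := by
  refine ⟨hb, fun x y ⟨f, hf, hxy⟩ hx hy => ?_⟩
  have hxf : x ∈ K.ends f := hxy ▸ Sym2.mem_mk_left x y
  have hyf : y ∈ K.ends f := hxy ▸ Sym2.mem_mk_right x y
  rcases hpart f hf with rfl | rfl | h | h | h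
  · rcases Sym2.eq_iff.mp (he.symm.trans hxy) with ⟨rfl, -⟩ | ⟨rfl, rfl⟩
    · exact absurd hx hsB
    · exact ⟨rfl, rfl⟩
  · rcases Sym2.eq_iff.mp (he'.symm.trans hxy) with ⟨rfl, -⟩ | ⟨-, rfl⟩
    · exact absurd hx hsB
    · exact absurd hb' (disjoint_left.mp hdisj hx)
  · exact absurd (h y hyf) hy
  · exact absurd (h x hxf) (disjoint_left.mp hdisj hx)
  · exact absurd hx (h x hxf)

lemma Cancellation.exists_isBranch {K : MGraph} {s : ℕ} {B C : Finset ℕ}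
    (h : K.Cancellation s B C) :
    B ⊆ K.verts ∧ C ⊆ K.verts ∧ Disjoint B C ∧
      ∃ b c, IsBranch K s b B ∧ IsBranch K s c C ∧
        ∃ φ : Iso (K.induce B) (K.induce C), φ.vmap b = c := by
  obtain ⟨e₁, e₂, v₁, v₂, -, hsB, hsC, hdisj, hBK, hCK, hv₁, hv₂, -, -, -, he₁, he₂, hpart,
    hφ⟩ := h
  have hout {f : ℕ} (hf : ∀ x ∈ K.ends f, x ∈ K.verts \ (B ∪ C)) :
      (∀ x ∈ K.ends f, x ∉ B) ∧ ∀ x ∈ K.ends f, x ∉ C := by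
    simp only [mem_sdiff, mem_union, not_or] at hf
    exact ⟨fun x hx => (hf x hx).2.1, fun x hx => (hf x hx).2.2⟩
  refine ⟨hBK, hCK, hdisj, v₁, v₂,
    isBranch_of_partition hsB hdisj hv₁ hv₂ he₁ he₂ fun f hf => ?_,
    isBranch_of_partition hsC hdisj.symm hv₂ hv₁ he₂ he₁ fun f hf => ?_, hφ⟩
  · rcases hpart f hf with h | h | h | h | h
    exacts [Or.inl h, Or.inr (Or.inl h), Or.inr (Or.inr (Or.inl h)),
      Or.inr (Or.inr (Or.inr (Or.inl h))), Or.inr (Or.inr (Or.inr (Or.inr (hout h).1)))]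
  · rcases hpart f hf with h | h | h | h | h
    exacts [Or.inr (Or.inl h), Or.inl h, Or.inr (Or.inr (Or.inr (Or.inl h))),
      Or.inr (Or.inr (Or.inl h)), Or.inr (Or.inr (Or.inr (Or.inr (hout h).2)))]

lemma Cancellation.of_induce {G : MGraph} {V : Finset ℕ} {s : ℕ} {B C : Finset ℕ}
    (hG : G.WF) (hV : V ⊆ G.verts)
    (hclosed : ∀ e ∈ G.edges, ∀ x ∈ G.ends e, x ∈ B ∪ C → ∀ y ∈ G.ends e, y ∈ V)
    (h : (G.induce V).Cancellation s B C) : G.Cancellation s B C := by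
  obtain ⟨e₁, e₂, v₁, v₂, hs, hsB, hsC, hdisj, hBV, hCV, hv₁, hv₂, he₁, he₂, hne, hends₁,
    hends₂, hpart, hφ⟩ := h
  refine ⟨e₁, e₂, v₁, v₂, hV hs, hsB, hsC, hdisj, hBV.trans hV, hCV.trans hV, hv₁,
    hv₂, (mem_induce_edges.mp he₁).1, (mem_induce_edges.mp he₂).1, hne, hends₁, hends₂,
    fun e he => ?_, ?_⟩
  · by_cases hin : ∀ y ∈ G.ends e, y ∈ V
    · rcases hpart e (mem_induce_edges.mpr ⟨he, hin⟩) with h | h | h | h | h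
      · exact Or.inl h
      · exact Or.inr (Or.inl h)
      · exact Or.inr (Or.inr (Or.inl h))
      · exact Or.inr (Or.inr (Or.inr (Or.inl h)))
      · refine Or.inr (Or.inr (Or.inr (Or.inr fun x hx => ?_)))
        exact mem_sdiff.mpr ⟨hV (mem_sdiff.mp (h x hx)).1, (mem_sdiff.mp (h x hx)).2⟩
    · refine Or.inr (Or.inr (Or.inr (Or.inr fun x hx => ?_)))
      exact mem_sdiff.mpr ⟨hG e he x hx, fun hxBC => hin (hclosed e he x hx hxBC)⟩
  · rw [← induce_induce G hBV, ← induce_induce G hCV]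
    exact hφ

namespace CycleWithTreeAt

variable {G C T : MGraph} {A : ℕ} (hG : CycleWithTreeAt G C T A)
include hG

lemma isTree : T.IsTree := hG.2.1

lemma verts_eq : G.verts = C.verts ∪ T.verts := hG.2.2.2.2.1

lemma edges_eq : G.edges = C.edges ∪ T.edges := hG.2.2.2.2.2.1

lemma ends_of_mem_cycle {e : ℕ} (he : e ∈ C.edges) : G.ends e = C.ends e :=
  hG.2.2.2.2.2.2.1 e he

lemma ends_of_mem_tree {e : ℕ} (he : e ∈ T.edges) : G.ends e = T.ends e :=
  hG.2.2.2.2.2.2.2 e he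

lemma root_mem_inter : A ∈ C.verts ∩ T.verts := hG.2.2.1 ▸ mem_singleton_self A

lemma root_mem : A ∈ T.verts := (mem_inter.mp hG.root_mem_inter).2

lemma notMem_cycle {x : ℕ} (hx : x ∈ T.verts) (hxA : x ≠ A) : x ∉ C.verts :=
  fun hC => hxA (mem_singleton.mp (hG.2.2.1 ▸ mem_inter.mpr ⟨hC, hx⟩))

lemma level_inter_cycle {x : ℕ} (hx : 1 ≤ x) : level T A x ∩ C.verts = ∅ := by
  refine eq_empty_of_forall_notMem fun u hu => ?_
  obtain ⟨hu, huC⟩ := mem_inter.mp hu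
  obtain ⟨huT, rfl⟩ := mem_filter.mp hu
  exact hG.notMem_cycle huT (fun h => by simp [h] at hx) huC

lemma cycle_wf : C.WF := by
  obtain ⟨n, -, hn⟩ := hG.1
  exact hn.wf

lemma wf : G.WF := by
  intro e he x hx
  rw [hG.verts_eq, mem_union]
  rcases mem_union.mp (hG.edges_eq ▸ he) with he | he
  · exact Or.inl (hG.cycle_wf e he x (hG.ends_of_mem_cycle he ▸ hx))
  · exact Or.inr (hG.isTree.1 e he x (hG.ends_of_mem_tree he ▸ hx))

lemma adj_tree {x y : ℕ} (h : G.Adj x y) (hy : y ∉ C.verts) : T.Adj x y := by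
  obtain ⟨e, he, hend⟩ := h
  rcases mem_union.mp (hG.edges_eq ▸ he) with he | he
  · exact absurd
      (hG.cycle_wf e he y (hG.ends_of_mem_cycle he ▸ hend ▸ Sym2.mem_mk_right x y)) hy
  · exact ⟨e, he, hG.ends_of_mem_tree he ▸ hend⟩

lemma adj_of_adj_tree {x y : ℕ} (h : T.Adj x y) : G.Adj x y := by
  obtain ⟨e, he, hend⟩ := h
  exact ⟨e, hG.edges_eq ▸ mem_union_right _ he, (hG.ends_of_mem_tree he).trans hend⟩

lemma degree_eq_add (u : ℕ) : G.degree u = C.degree u + T.degree u := by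
  rw [degree, hG.edges_eq, sum_union hG.2.2.2.1, degree, degree]
  congr 1
  · exact sum_congr rfl fun e he => by rw [hG.ends_of_mem_cycle he]
  · exact sum_congr rfl fun e he => by rw [hG.ends_of_mem_tree he]

lemma degree_root : G.degree A = 2 + #(level T A 1) := by
  obtain ⟨n, -, hn⟩ := hG.1
  rw [hG.degree_eq_add, hn.degree_eq_two (mem_inter.mp hG.root_mem_inter).1,
    degree_eq hG.isTree hG.root_mem hG.root_mem, if_pos rfl, add_zero,
    children_root hG.isTree hG.root_mem]

lemma sum_degree {X : Finset ℕ} (hX : ∀ u ∈ X, u ∈ T.verts ∧ u ≠ A) :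
    ∑ u ∈ X, G.degree u = #X + #{c ∈ T.verts.erase A | parent T A c ∈ X} := by
  have hdeg : ∀ u ∈ X, G.degree u = #(children T A u) + 1 := fun u hu => by
    rw [hG.degree_eq_add, degree_eq_zero_of_notMem hG.cycle_wf
      (hG.notMem_cycle (hX u hu).1 (hX u hu).2), zero_add,
      degree_eq hG.isTree hG.root_mem (hX u hu).1, if_neg (hX u hu).2]
  rw [sum_congr rfl hdeg, sum_add_distrib, sum_const, smul_eq_mul, mul_one, add_comm]
  simp only [children]
  rw [sum_card_fiberwise_eq_card_filter]

end CycleWithTreeAt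

def Deficient (T : MGraph) (A : ℕ) (V : Finset ℕ) (u : ℕ) : Prop :=
  u ∈ V ∧ ∃ w, InSubtree T A u w ∧ w ∉ V

/-- The vertex set `V` of an intermediate stage of the reduction of the component of `A` in
`G - v`, whose deficient vertices are the ancestors of `t`. -/
structure StageInv (G T : MGraph) (A : ℕ) (V : Finset ℕ) (t : ℕ) : Prop where
  subset : V ⊆ G.verts
  parent_closed : ∀ u ∈ V, u ∈ T.verts → u ≠ A → parent T A u ∈ V
  mem : t ∈ T.verts
  deficient_iff : ∀ u, Deficient T A V u ↔ InSubtree T A u t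

lemma mem_of_not_deficient {T : MGraph} {A : ℕ} {V : Finset ℕ} {b w : ℕ} (hbV : b ∈ V)
    (hb : ¬ Deficient T A V b) (h : InSubtree T A b w) : w ∈ V :=
  by_contra fun hw => hb ⟨hbV, w, h, hw⟩

section Stage

variable {G T : MGraph} {A : ℕ} (hT : T.IsTree) (hA : A ∈ T.verts)
include hT hA

lemma StageInv.sdiff {V : Finset ℕ} {t b c s : ℕ} (hInv : StageInv G T A V t)
    (hb : b ∈ T.verts) (hbA : b ≠ A) (hc : c ∈ T.verts) (hcA : c ≠ A)
    (hbs : parent T A b = s) (hcs : parent T A c = s) (hbt : InSubtree T A b t) :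
    StageInv G T A {u ∈ V | ¬ InSubtree T A b u ∧ ¬ InSubtree T A c u} s where
  subset := (filter_subset _ _).trans hInv.subset
  parent_closed u hu huT huA := by
    obtain ⟨huV, hbu, hcu⟩ := mem_filter.mp hu
    have hpu := inSubtree_parent hT hA huT huA
    exact mem_filter.mpr ⟨hInv.parent_closed u huV huT huA, fun h => hbu (h.trans hpu),
      fun h => hcu (h.trans hpu)⟩
  mem := hbs ▸ parent_mem hT hA hb hbA
  deficient_iff u := by
    have hsb : InSubtree T A s b := hbs ▸ inSubtree_parent hT hA hb hbA
    constructor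
    · rintro ⟨hu, w, huw, hw⟩
      obtain ⟨huV, hbu, hcu⟩ := mem_filter.mp hu
      simp only [mem_filter, not_and_or, not_not] at hw
      rcases hw with hwV | hbw | hcw
      · have hut := (hInv.deficient_iff u).mp ⟨huV, w, huw, hwV⟩
        exact hbs ▸ hut.parent_of_not_inSubtree hT hA hbt hbu
      · exact hbs ▸ huw.parent_of_not_inSubtree hT hA hbw hbu
      · exact hcs ▸ huw.parent_of_not_inSubtree hT hA hcw hcu
    · intro hus
      have huV := ((hInv.deficient_iff u).mpr (hus.trans (hsb.trans hbt))).1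
      have := edist_parent hT hA hb hbA
      have := edist_parent hT hA hc hcA
      have := hus.edist_le
      rw [hbs] at *
      rw [hcs] at *
      refine ⟨mem_filter.mpr ⟨huV, fun h => ?_, fun h => ?_⟩, b, hus.trans hsb,
        fun h => (mem_filter.mp h).2.1 (InSubtree.refl hb)⟩ <;>
      · have := h.edist_le
        omega

lemma card_level_one_inter_subtree {V : Finset ℕ} {b : ℕ} (hb : b ∈ T.verts) (hbA : b ≠ A)
    (hbV : b ∈ V) :
    #(level T A 1 ∩ {u ∈ V | InSubtree T A b u}) = if parent T A b = A then 1 else 0 := by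
  have hdb := edist_parent hT hA hb hbA
  have hpb := edist_eq_zero_iff hT hA (parent_mem hT hA hb hbA)
  have hmem : ∀ u, u ∈ level T A 1 ∩ {u ∈ V | InSubtree T A b u} ↔
      u = b ∧ T.edist A b = 1 := fun u => by
    simp only [level, mem_inter, mem_filter]
    constructor
    · rintro ⟨⟨-, hu1⟩, -, hbu⟩
      have := hbu.edist_le
      exact ⟨hbu.eq_of_edist_le (by omega), by omega⟩
    · rintro ⟨rfl, hu1⟩
      exact ⟨⟨hb, hu1⟩, hbV, InSubtree.refl hb⟩
  split_ifs with h
  · exact card_eq_one.mpr ⟨b, ext fun u => by rw [hmem, mem_singleton]; omega⟩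
  · exact card_eq_zero.mpr (eq_empty_of_forall_notMem fun u hu => by
      have := (hmem u).mp hu
      omega)

end Stage

section Branch

variable {G C T : MGraph} {A : ℕ} (hG : CycleWithTreeAt G C T A) {V : Finset ℕ}
  (hpar : ∀ u ∈ V, u ∈ T.verts → u ≠ A → parent T A u ∈ V)
include hG hpar

lemma adj_induce_parent {u : ℕ} (hu : u ∈ T.verts) (huA : u ≠ A) (huV : u ∈ V) :
    (G.induce V).Adj u (parent T A u) :=
  adj_induce_iff.mpr ⟨hG.adj_of_adj_tree (adj_parent hG.isTree hG.root_mem hu huA), huV,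
    hpar u huV hu huA⟩

lemma branch_inSubtree_root {s b : ℕ} {B : Finset ℕ} (hbr : IsBranch (G.induce V) s b B)
    (hBV : B ⊆ V) (hBT : ∀ u ∈ B, u ∈ T.verts ∧ u ≠ A) :
    ∀ u ∈ B, InSubtree T A b u ∧ parent T A b = s := by
  have hT := hG.isTree
  have hA := hG.root_mem
  suffices ∀ u ∈ T.verts, u ∈ B → InSubtree T A b u ∧ parent T A b = s from
    fun u hu => this u (hBT u hu).1 hu
  refine induction_on_parent hT hA (fun h => absurd rfl (hBT A h).2) fun u hu huA ih huB => ?_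
  by_cases hp : parent T A u ∈ B
  · exact ⟨(ih hp).1.trans (inSubtree_parent hT hA hu huA), (ih hp).2⟩
  · obtain ⟨rfl, rfl⟩ := hbr.2 _ _ (adj_induce_parent hG hpar hu huA (hBV huB)) huB hp
    exact ⟨InSubtree.refl hu, rfl⟩

lemma mem_branch_of_inSubtree {b : ℕ} {B : Finset ℕ}
    (hbr : IsBranch (G.induce V) (parent T A b) b B)
    (hBT : ∀ u ∈ B, u ∈ T.verts ∧ u ≠ A) :
    ∀ u, InSubtree T A b u → u ∈ V → u ∈ B := by
  have hT := hG.isTree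
  have hA := hG.root_mem
  obtain ⟨hb, hbA⟩ := hBT b hbr.1
  suffices ∀ u ∈ T.verts, InSubtree T A b u → u ∈ V → u ∈ B from
    fun u hbu => this u hbu.mem hbu
  refine induction_on_parent hT hA (fun h _ => absurd rfl (h.ne_root hbA))
    fun u hu huA ih hbu huV => ?_
  by_cases hub : u = b
  · exact hub ▸ hbr.1
  have hpb := (hbu.parent_of_ne hT hA hub).2
  have hpB := ih hpb (hpar u huV hu huA)
  by_contra huB
  have hus := (hbr.2 _ _ (adj_induce_parent hG hpar hu huA huV).symm hpB huB).2
  have := edist_parent hT hA hb hbA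
  have := hbu.edist_le
  rw [hus] at this
  omega

lemma eq_filter_of_isBranch {s b : ℕ} {B : Finset ℕ} (hbr : IsBranch (G.induce V) s b B)
    (hBV : B ⊆ V) (hBT : ∀ u ∈ B, u ∈ T.verts ∧ u ≠ A) :
    parent T A b = s ∧ B = {u ∈ V | InSubtree T A b u} := by
  obtain ⟨-, rfl⟩ := branch_inSubtree_root hG hpar hbr hBV hBT b hbr.1
  refine ⟨rfl, ext fun u => ⟨fun hu => mem_filter.mpr ⟨hBV hu, ?_⟩, fun hu => ?_⟩⟩
  · exact (branch_inSubtree_root hG hpar hbr hBV hBT u hu).1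
  · exact mem_branch_of_inSubtree hG hpar hbr hBT u (mem_filter.mp hu).2 (mem_filter.mp hu).1

lemma walkLen_subtree {b : ℕ} :
    ∀ u ∈ V, InSubtree T A b u →
      (G.induce {w ∈ V | InSubtree T A b w}).WalkLen b u (T.edist A u - T.edist A b) := by
  have hT := hG.isTree
  have hA := hG.root_mem
  suffices ∀ u ∈ T.verts, u ∈ V → InSubtree T A b u →
      (G.induce {w ∈ V | InSubtree T A b w}).WalkLen b u (T.edist A u - T.edist A b) from
    fun u huV hbu => this u hbu.mem huV hbu
  refine induction_on_parent hT hA ?_ fun u hu huA ih huV hbu => ?_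
  · intro _ hbA
    obtain rfl := hbA.eq_of_edist_le (by simp)
    simpa using WalkLen.refl _ A
  by_cases hub : u = b
  · subst hub
    simpa using WalkLen.refl _ u
  have hpb := (hbu.parent_of_ne hT hA hub).2
  have hpV := hpar u huV hu huA
  have hadj : (G.induce {w ∈ V | InSubtree T A b w}).Adj (parent T A u) u :=
    adj_induce_iff.mpr ⟨(adj_induce_iff.mp (adj_induce_parent hG hpar hu huA huV)).1.symm,
      mem_filter.mpr ⟨hpV, hpb⟩, mem_filter.mpr ⟨huV, hbu⟩⟩
  have := edist_parent hT hA hu huA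
  have := hpb.edist_le
  convert (ih hpV hpb).concat hadj using 1
  omega

/-- `φ` carries the walk down from `b` to `u` to a walk of the same length from `c`, and a walk in
the tree changes the depth by at most its length. -/
lemma edist_vmap_le {b c : ℕ} (hc : c ∈ T.verts) (hcA : c ≠ A)
    (hcb : T.edist A c ≤ T.edist A b)
    (φ : Iso (G.induce {w ∈ V | InSubtree T A b w}) (G.induce {w ∈ V | InSubtree T A c w}))
    (hφ : φ.vmap b = c) {u : ℕ} (huV : u ∈ V) (hbu : InSubtree T A b u) :
    T.edist A (φ.vmap u) ≤ T.edist A u := by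
  have hT := hG.isTree
  have hA := hG.root_mem
  have hwalk := hφ ▸ φ.walkLen_map (walkLen_subtree hG hpar u huV hbu)
  have hTwalk := hwalk.mono fun x y hxy => by
    obtain ⟨hxy, -, hy⟩ := adj_induce_iff.mp hxy
    have hcy := (mem_filter.mp hy).2
    exact hG.adj_tree hxy (hG.notMem_cycle hcy.mem (hcy.ne_root hcA))
  have := edist_le_of_walkLen hT hA hc hTwalk
  have := hbu.edist_le
  omega

section PieceIso

variable {b c : ℕ} (hbV : b ∈ V) (hb : b ∈ T.verts) (hbA : b ≠ A) (hc : c ∈ T.verts)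
  (hcA : c ≠ A) (hbc : T.edist A b = T.edist A c)
  (φ : Iso (G.induce {w ∈ V | InSubtree T A b w}) (G.induce {w ∈ V | InSubtree T A c w}))
  (hφ : φ.vmap b = c)
include hbV hb hbA hc hcA hbc hφ

lemma edist_vmap_eq {u : ℕ} (hu : u ∈ {w ∈ V | InSubtree T A b w}) :
    T.edist A (φ.vmap u) = T.edist A u := by
  have hwf := induce_wf G {w ∈ V | InSubtree T A b w}
  have hψ := φ.symm_vmap_vmap hwf (mem_filter.mpr ⟨hbV, InSubtree.refl hb⟩)
  rw [hφ] at hψ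
  have hφu := mem_filter.mp (φ.vmap_bij.mapsTo hu)
  refine le_antisymm (edist_vmap_le hG hpar hc hcA hbc.ge φ hφ (mem_filter.mp hu).1
    (mem_filter.mp hu).2) ?_
  have := edist_vmap_le hG hpar hb hbA hbc.le (φ.symm hwf) hψ hφu.1 hφu.2
  rwa [φ.symm_vmap_vmap hwf hu] at this

lemma card_level_inter_eq (x : ℕ) :
    #(level T A x ∩ {w ∈ V | InSubtree T A b w}) =
      #(level T A x ∩ {w ∈ V | InSubtree T A c w}) := by
  have hwf := induce_wf G {w ∈ V | InSubtree T A b w}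
  have hφdepth {u : ℕ} := edist_vmap_eq hG hpar hbV hb hbA hc hcA hbc φ hφ (u := u)
  refine card_nbij' φ.vmap (φ.symm hwf).vmap (fun u hu => ?_) (fun w hw => ?_) (fun u hu => ?_)
    fun w hw => ?_
  · obtain ⟨hux, huB⟩ := mem_inter.mp hu
    have hφu := φ.vmap_bij.mapsTo huB
    refine mem_inter.mpr ⟨mem_filter.mpr ⟨(mem_filter.mp hφu).2.mem, ?_⟩, hφu⟩
    rw [hφdepth huB]
    exact (mem_filter.mp hux).2
  · obtain ⟨hwx, hwC⟩ := mem_inter.mp hw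
    have hψw := (φ.symm hwf).vmap_bij.mapsTo hwC
    refine mem_inter.mpr ⟨mem_filter.mpr ⟨(mem_filter.mp hψw).2.mem, ?_⟩, hψw⟩
    rw [← hφdepth hψw, φ.vmap_symm_vmap hwf hwC]
    exact (mem_filter.mp hwx).2
  · exact φ.symm_vmap_vmap hwf (mem_inter.mp hu).2
  · exact φ.vmap_symm_vmap hwf (mem_inter.mp hw).2

end PieceIso

lemma ends_mem_of_subtree_subset {x : ℕ} (hx : x ∈ T.verts) (hxA : x ≠ A) (hxV : x ∈ V)
    (hsub : ∀ w, InSubtree T A x w → w ∈ V) {e : ℕ} (he : e ∈ G.edges)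
    (hxe : x ∈ G.ends e) :
    ∀ y ∈ G.ends e, y ∈ V := by
  have hT := hG.isTree
  have hA := hG.root_mem
  intro y hy
  obtain ⟨z, hz⟩ := Sym2.mem_iff_exists.mp hxe
  rcases Sym2.mem_iff.mp (hz ▸ hy) with rfl | rfl
  · exact hxV
  have hadj := hG.adj_tree ⟨e, he, hz.trans Sym2.eq_swap⟩ (hG.notMem_cycle hx hxA)
  rcases (adj_iff hT hA).mp hadj with ⟨hyT, hyA, rfl⟩ | ⟨-, -, rfl⟩
  · exact hsub y (inSubtree_parent hT hA hyT hyA)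
  · exact hpar x hxV hx hxA

/-- If neither root is deficient, both pieces are whole subtrees, and the cancellation could
already be performed in `G`. -/
lemma deficient_or_deficient (hRed : G.Reduced) (hV : V ⊆ G.verts) {s b c : ℕ}
    (hcan : (G.induce V).Cancellation s {u ∈ V | InSubtree T A b u} {u ∈ V | InSubtree T A c u})
    (hbA : b ≠ A) (hcA : c ≠ A) (hbV : b ∈ V) (hcV : c ∈ V) :
    Deficient T A V b ∨ Deficient T A V c := by
  by_contra! h
  refine hRed s ⟨_, _, hcan.of_induce hG.wf hV fun e he x hx hxBC => ?_⟩
  rcases mem_union.mp hxBC with hxB | hxC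
  · obtain ⟨hxV, hbx⟩ := mem_filter.mp hxB
    exact ends_mem_of_subtree_subset hG hpar hbx.mem (hbx.ne_root hbA) hxV
      (fun w hxw => mem_of_not_deficient hbV h.1 (hbx.trans hxw)) he hx
  · obtain ⟨hxV, hcx⟩ := mem_filter.mp hxC
    exact ends_mem_of_subtree_subset hG hpar hcx.mem (hcx.ne_root hcA) hxV
      (fun w hxw => mem_of_not_deficient hcV h.2 (hcx.trans hxw)) he hx

end Branch

section Reduction

variable {G C T : MGraph} {A : ℕ} (hG : CycleWithTreeAt G C T A)
include hG

lemma exists_subtree_pieces {V : Finset ℕ} {t s : ℕ} {B B' : Finset ℕ}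
    (hInv : StageInv G T A V t) (hcan : (G.induce V).Cancellation s B B')
    (hC : C.verts ⊆ V \ (B ∪ B')) :
    ∃ b c, b ∈ V ∧ b ∈ T.verts ∧ b ≠ A ∧ parent T A b = s ∧
      B = {u ∈ V | InSubtree T A b u} ∧ c ∈ V ∧ c ∈ T.verts ∧ c ≠ A ∧ parent T A c = s ∧
      B' = {u ∈ V | InSubtree T A c u} ∧
      ∃ φ : Iso (G.induce B) (G.induce B'), φ.vmap b = c := by
  obtain ⟨hBV, hB'V, -, b, c, hbr, hcr, hiso⟩ := hcan.exists_isBranch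
  change B ⊆ V at hBV
  change B' ⊆ V at hB'V
  have hoff {X : Finset ℕ} (hXV : X ⊆ V) (hX : X ⊆ B ∪ B') :
      ∀ u ∈ X, u ∈ T.verts ∧ u ≠ A :=
    fun u hu => by
      have huC : u ∉ C.verts := fun h => (mem_sdiff.mp (hC h)).2 (hX hu)
      have huT := (mem_union.mp (hG.verts_eq ▸ hInv.subset (hXV hu))).resolve_left huC
      exact ⟨huT, fun h => huC (h ▸ (mem_inter.mp hG.root_mem_inter).1)⟩
  have hBT := hoff hBV subset_union_left
  have hB'T := hoff hB'V subset_union_right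
  obtain ⟨hbs, hB⟩ := eq_filter_of_isBranch hG hInv.parent_closed hbr hBV hBT
  obtain ⟨hcs, hB'⟩ := eq_filter_of_isBranch hG hInv.parent_closed hcr hB'V hB'T
  refine ⟨b, c, hBV hbr.1, (hBT b hbr.1).1, (hBT b hbr.1).2, hbs, hB, hB'V hcr.1,
    (hB'T c hcr.1).1, (hB'T c hcr.1).2, hcs, hB', ?_⟩
  rwa [← induce_induce G hBV, ← induce_induce G hB'V]

lemma stage_step (hRed : G.Reduced) {V : Finset ℕ} {t s : ℕ} {B B' : Finset ℕ}
    (hInv : StageInv G T A V t) (hcan : (G.induce V).Cancellation s B B')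
    (hC : C.verts ⊆ V \ (B ∪ B')) :
    B ∪ B' ⊆ V ∧ StageInv G T A (V \ (B ∪ B')) s ∧ t ≠ A ∧
      (∀ x, #(level T A x ∩ (B ∪ B')) = 2 * #(level T A x ∩ B)) ∧
      #(level T A 1 ∩ B) = if s = A then 1 else 0 := by
  have hT := hG.isTree
  have hA := hG.root_mem
  have hdisj := hcan.exists_isBranch.2.2.1
  obtain ⟨b, c, hbV, hb, hbA, hbs, rfl, hcV, hc, hcA, hcs, rfl, φ, hφ⟩ :=
    exists_subtree_pieces hG hInv hcan hC
  have hbc : T.edist A b = T.edist A c := by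
    have := edist_parent hT hA hb hbA
    have := edist_parent hT hA hc hcA
    rw [hbs] at *
    rw [hcs] at *
    omega
  have hsdiff : V \ ({u ∈ V | InSubtree T A b u} ∪ {u ∈ V | InSubtree T A c u}) =
      {u ∈ V | ¬ InSubtree T A b u ∧ ¬ InSubtree T A c u} := by
    ext u
    simp only [mem_sdiff, mem_union, mem_filter]
    tauto
  have hdef := deficient_or_deficient hG hInv.parent_closed hRed hInv.subset hcan hbA hcA hbV hcV
  refine ⟨union_subset (filter_subset _ _) (filter_subset _ _), hsdiff ▸ ?_, ?_, fun x => ?_,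
    ?_⟩
  · rcases hdef with h | h
    · exact hInv.sdiff hT hA hb hbA hc hcA hbs hcs ((hInv.deficient_iff b).mp h)
    · simp_rw [and_comm (a := ¬ InSubtree T A b _)]
      exact hInv.sdiff hT hA hc hcA hb hbA hcs hbs ((hInv.deficient_iff c).mp h)
  · rcases hdef with h | h
    · exact ((hInv.deficient_iff b).mp h).ne_root hbA
    · exact ((hInv.deficient_iff c).mp h).ne_root hcA
  · rw [inter_union_distrib_left, card_union_of_disjoint
      (hdisj.mono inter_subset_right inter_subset_right),
      ← card_level_inter_eq hG hInv.parent_closed hbV hb hbA hc hcA hbc φ hφ x, two_mul]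
  · rw [card_level_one_inter_subtree hT hA hb hbA hbV, hbs]

lemma card_level_inter_of_reducesTo (hRed : G.Reduced) {H : MGraph} (hH : H.SameGraph C)
    {K : MGraph} (hK : ReducesTo K H) : ∀ V t, K = G.induce V → StageInv G T A V t →
      (∀ x, 1 ≤ x → Even #(level T A x ∩ V)) ∧
        #(level T A 1 ∩ V) = if t = A then 0 else 2 := by
  induction hK using Relation.ReflTransGen.head_induction_on with
  | refl =>
    rintro V t rfl hInv
    obtain rfl : V = C.verts := hH.1
    have htA : t = A := by_contra fun h => hG.notMem_cycle hInv.mem h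
      ((hInv.deficient_iff t).mpr (InSubtree.refl hInv.mem)).1
    refine ⟨fun x hx => ?_, ?_⟩
    · rw [hG.level_inter_cycle hx]
      exact Even.zero
    · rw [hG.level_inter_cycle le_rfl, if_pos htA, card_empty]
  | head hstep hrest ih =>
    rintro V t rfl hInv
    obtain ⟨s, B, B', hcan, rfl⟩ := hstep
    have hC : C.verts ⊆ V \ (B ∪ B') := by
      rw [← hH.1]
      exact ReducesTo.verts_subset hrest
    obtain ⟨hBV, hInv', htA, hcard, hone⟩ := stage_step hG hRed hInv hcan hC
    obtain ⟨heven, hone'⟩ := ih (V \ (B ∪ B')) s (induce_induce G sdiff_subset) hInv'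
    have hsplit (x : ℕ) : #(level T A x ∩ V) =
        #(level T A x ∩ (V \ (B ∪ B'))) + #(level T A x ∩ (B ∪ B')) := by
      rw [← card_union_of_disjoint (disjoint_sdiff_self_left.mono inter_subset_right
        inter_subset_right), ← inter_union_distrib_left, sdiff_union_of_subset hBV]
    refine ⟨fun x hx => ?_, ?_⟩
    · rw [hsplit, hcard]
      exact (heven x hx).add (even_two_mul _)
    · rw [hsplit, hcard, hone', hone, if_neg htA]
      split_ifs <;> rfl

end Reduction

lemma component_delVert (G : MGraph) (v A : ℕ) :
    (G.delVert v).component A = G.induce ((G.delVert v).component A).verts :=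
  delVert_induce fun h => notMem_erase v G.verts (mem_filter.mp h).1

section Component

variable {G C T : MGraph} {A v : ℕ} (hG : CycleWithTreeAt G C T A)
include hG

lemma not_inSubtree_of_reach (hvA : v ≠ A) {x : ℕ} (h : (G.delVert v).Reach A x) :
    ¬ InSubtree T A v x := by
  induction h with
  | refl => exact fun h => hvA (h.eq_of_edist_le (by simp)).symm
  | tail _ hadj ih =>
    intro hvc
    obtain ⟨hbc, -, hcv⟩ := adj_delVert_iff.mp hadj
    exact ih (hvc.of_adj hG.isTree hG.root_mem hcv
      (hG.adj_tree hbc (hG.notMem_cycle hvc.mem (hvc.ne_root hvA))))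

lemma reach_of_not_inSubtree :
    ∀ u ∈ T.verts, ¬ InSubtree T A v u → (G.delVert v).Reach A u := by
  have hT := hG.isTree
  have hA := hG.root_mem
  refine induction_on_parent hT hA (fun _ => Relation.ReflTransGen.refl)
    fun u hu huA ih hvu => (ih fun h => hvu (h.trans (inSubtree_parent hT hA hu huA))).tail ?_
  refine adj_delVert_iff.mpr ⟨hG.adj_of_adj_tree (adj_parent hT hA hu huA).symm, ?_, ?_⟩
  · intro h
    exact hvu (h ▸ inSubtree_parent hT hA hu huA)
  · rintro rfl
    exact hvu (InSubtree.refl hu)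

lemma mem_component_iff (hvA : v ≠ A) {u : ℕ} (hu : u ∈ T.verts) :
    u ∈ ((G.delVert v).component A).verts ↔ ¬ InSubtree T A v u := by
  refine ⟨fun h => not_inSubtree_of_reach hG hvA (mem_filter.mp h).2, fun h => ?_⟩
  refine mem_filter.mpr ⟨mem_erase.mpr ⟨?_, ?_⟩, reach_of_not_inSubtree hG u hu h⟩
  · rintro rfl
    exact h (InSubtree.refl hu)
  · exact hG.verts_eq ▸ mem_union_right _ hu

lemma stageInv_component (hv : v ∈ T.verts) (hvA : v ≠ A) :
    StageInv G T A ((G.delVert v).component A).verts (parent T A v) where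
  subset _ hu := mem_of_mem_erase (mem_filter.mp hu).1
  parent_closed u hu huT huA := by
    have hT := hG.isTree
    have hA := hG.root_mem
    exact (mem_component_iff hG hvA (parent_mem hT hA huT huA)).mpr fun h =>
      (mem_component_iff hG hvA huT).mp hu (h.trans (inSubtree_parent hT hA huT huA))
  mem := parent_mem hG.isTree hG.root_mem hv hvA
  deficient_iff u := by
    have hT := hG.isTree
    have hA := hG.root_mem
    constructor
    · rintro ⟨huV, w, huw, hwV⟩
      have hvw : InSubtree T A v w :=
        by_contra fun h => hwV ((mem_component_iff hG hvA huw.mem).mpr h)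
      exact huw.parent_of_not_inSubtree hT hA hvw
        ((mem_component_iff hG hvA (huw.mem_root hT hA)).mp huV)
    · intro hu
      have := edist_parent hT hA hv hvA
      have := hu.edist_le
      refine ⟨(mem_component_iff hG hvA (hu.mem_root hT hA)).mpr fun h => ?_, v,
        hu.trans (inSubtree_parent hT hA hv hvA),
        fun h => (mem_component_iff hG hvA hv).mp h (InSubtree.refl hv)⟩
      have := h.edist_le
      omega

lemma level_inter_component (hvA : v ≠ A) (x : ℕ) :
    level T A x ∩ ((G.delVert v).component A).verts =
      {u ∈ level T A x | ¬ InSubtree T A v u} := by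
  ext u
  rw [mem_inter, mem_filter]
  exact and_congr_right fun hu => mem_component_iff hG hvA (mem_filter.mp hu).1

lemma level_inter_component_of_lt (hvA : v ≠ A) {x : ℕ} (hx : x < T.edist A v) :
    level T A x ∩ ((G.delVert v).component A).verts = level T A x := by
  rw [level_inter_component hG hvA]
  refine filter_true_of_mem fun u hu h => ?_
  have := h.edist_le
  rw [(mem_filter.mp hu).2] at this
  omega

lemma level_inter_component_self (hv : v ∈ T.verts) (hvA : v ≠ A) :
    level T A (T.edist A v) ∩ ((G.delVert v).component A).verts =
      (level T A (T.edist A v)).erase v := by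
  rw [level_inter_component hG hvA, ← filter_ne']
  refine filter_congr fun u hu => ⟨fun h huv => h (by rw [huv]; exact InSubtree.refl hv),
    fun h hvu => h (hvu.eq_of_edist_le (mem_filter.mp hu).2.le)⟩

lemma level_succ_inter_component (hvA : v ≠ A) :
    level T A (T.edist A v + 1) ∩ ((G.delVert v).component A).verts =
      {c ∈ T.verts.erase A | parent T A c ∈ (level T A (T.edist A v)).erase v} := by
  have hT := hG.isTree
  have hA := hG.root_mem
  rw [level_inter_component hG hvA]
  ext u
  simp only [level, mem_filter, mem_erase]
  constructor
  · rintro ⟨⟨hu, hud⟩, hvu⟩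
    have huA : u ≠ A := fun h => by simp [h] at hud
    have := edist_parent hT hA hu huA
    exact ⟨⟨huA, hu⟩, fun h => hvu ⟨hu, 1, h, by omega⟩, parent_mem hT hA hu huA,
      by omega⟩
  · rintro ⟨⟨huA, hu⟩, hpv, -, hpd⟩
    have := edist_parent hT hA hu huA
    refine ⟨⟨hu, by omega⟩, fun hvu => hpv ?_⟩
    exact (hvu.parent_of_ne hT hA fun h => by subst h; omega).2.eq_of_edist_le (by omega)

lemma degree_root_le_four (hv : v ∈ T.verts) (hvA : v ≠ A)
    (hone : #(level T A 1 ∩ ((G.delVert v).component A).verts) =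
      if parent T A v = A then 0 else 2) :
    G.degree A ≤ 4 ∧ (G.degree A = 3 ↔ T.edist A v = 1) := by
  have hT := hG.isTree
  have hA := hG.root_mem
  have hpv : parent T A v = A ↔ T.edist A v = 1 := by
    rw [← edist_eq_zero_iff hT hA (parent_mem hT hA hv hvA)]
    have := edist_parent hT hA hv hvA
    omega
  rw [hG.degree_root]
  rcases Nat.lt_or_ge 1 (T.edist A v) with h | h
  · rw [level_inter_component_of_lt hG hvA h, if_neg fun h' => by omega] at hone
    omega
  · have h1 : T.edist A v = 1 := le_antisymm h (edist_pos hT hA hv hvA)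
    have hmid := level_inter_component_self hG hv hvA
    have hv1 := mem_level_edist (A := A) hv
    rw [h1] at hmid hv1
    rw [if_pos (hpv.mpr h1), hmid] at hone
    have := card_erase_add_one hv1
    omega

variable (hvA : v ≠ A)
  (heven : ∀ x, 1 ≤ x → Even #(level T A x ∩ ((G.delVert v).component A).verts))
include hvA heven

lemma even_card_level_of_lt {x : ℕ} (hx : 1 ≤ x) (hxv : x < T.edist A v) :
    Even #(level T A x) :=
  level_inter_component_of_lt hG hvA hxv ▸ heven x hx

lemma odd_card_level_self (hv : v ∈ T.verts) : Odd #(level T A (T.edist A v)) := by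
  have hv1 := edist_pos hG.isTree hG.root_mem hv hvA
  rw [← card_erase_add_one (mem_level_edist hv), ← level_inter_component_self hG hv hvA]
  exact (heven _ hv1).add_one

lemma even_sum_degree_level_erase (hv : v ∈ T.verts) :
    Even (∑ u ∈ (level T A (T.edist A v)).erase v, G.degree u) := by
  have hv1 := edist_pos hG.isTree hG.root_mem hv hvA
  rw [hG.sum_degree fun u hu => ?_, ← level_succ_inter_component hG hvA,
    ← level_inter_component_self hG hv hvA]
  · exact (heven _ hv1).add (heven _ (by omega))
  · obtain ⟨huT, hud⟩ := mem_filter.mp (mem_of_mem_erase hu)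
    exact ⟨huT, fun h => by rw [h, edist_self] at hud; omega⟩

end Component

end MGraph

open MGraph in
/-- Let `G` be a reduced graph consisting of an odd cycle `C` attached to the
tree `T` at the vertex `A` and, for `x ≥ 1`, let `S_x` be the set of tree
vertices at distance `x` from `A`.  If `G` has a telescoping vertex `v ∈ S_d`
with `d ≥ 1`, then: (i) `deg A ≤ 4`, and `deg A = 3 ↔ d = 1`;
(ii) `|S_1|, …, |S_{d-1}|` are even and `|S_d|` is odd;
(iii) the total degree of the vertices of `S_d \ {v}` is even. -/
theorem telescoping_properties (G C T : MGraph) (A : ℕ) (d v : ℕ)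
    (hRed : G.Reduced) (hG : CycleWithTreeAt G C T A)
    (hd : 1 ≤ d) (hvT : v ∈ T.verts) (hdist : T.edist A v = d)
    (hTel : Telescoping G C A v) :
    (G.degree A ≤ 4 ∧ (G.degree A = 3 ↔ d = 1)) ∧
    ((∀ x, 1 ≤ x → x < d →
        Even ((T.verts.filter fun w => T.edist A w = x).card)) ∧
      Odd ((T.verts.filter fun w => T.edist A w = d).card)) ∧
    Even (∑ u ∈ (T.verts.filter fun w => T.edist A w = d).erase v,
      G.degree u) := by
  obtain ⟨-, -, H, hred, hH⟩ := hTel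
  have hvA : v ≠ A := by
    rintro rfl
    simp at hdist
    omega
  subst hdist
  obtain ⟨heven, hone⟩ := card_level_inter_of_reducesTo hG hRed hH hred _ _
    (component_delVert G v A) (stageInv_component hG hvT hvA)
  exact ⟨degree_root_le_four hG hvT hvA hone,
    ⟨fun x hx hxv => even_card_level_of_lt hG hvA heven hx hxv,
      odd_card_level_self hG hvA heven hvT⟩,
    even_sum_degree_level_erase hG hvA heven hvT⟩
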